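/- Let b, c, x₃ be complex numbers with bc ≠ 0. The 9×9 matrix given in block form [1], [[1−bc, b],[c, 0]], [[1−bc, 0, b/c],[−x₃c², 1, x₃],[c², 0, 0]], [[1−bc, b],[c, 0]], [1] satisfies the braid relation R̂₁R̂₂R̂₁ = R̂₂R̂₁R̂₂. -/

import Mathlib

open Matrix Polynomial

noncomputable section

/-- `R̂ ⊗ 1` acting on `V ⊗ V ⊗ V` with `V = ℂ^3`. -/
def R1 (R : Matrix (Fin 3 × Fin 3) (Fin 3 × Fin 3) ℂ) :
    Matrix (Fin 3 × Fin 3 × Fin 3) (Fin 3 × Fin 3 × Fin 3) ℂ :=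
  fun p q => R (p.1, p.2.1) (q.1, q.2.1) * (if p.2.2 = q.2.2 then 1 else 0)

/-- `1 ⊗ R̂` acting on `V ⊗ V ⊗ V` with `V = ℂ^3`. -/
def R2 (R : Matrix (Fin 3 × Fin 3) (Fin 3 × Fin 3) ℂ) :
    Matrix (Fin 3 × Fin 3 × Fin 3) (Fin 3 × Fin 3 × Fin 3) ℂ :=
  fun p q => (if p.1 = q.1 then 1 else 0) * R (p.2.1, p.2.2) (q.2.1, q.2.2)

/-- The braid relation `R̂₁R̂₂R̂₁ = R̂₂R̂₁R̂₂`. -/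
def Braid (R : Matrix (Fin 3 × Fin 3) (Fin 3 × Fin 3) ℂ) : Prop :=
  R1 R * R2 R * R1 R = R2 R * R1 R * R2 R

/-- position within the charge-1 sector: |10⟩, |01⟩. -/
def f1 (p : Fin 3 × Fin 3) : Fin 2 := if p = (1, 0) then 0 else 1

/-- position within the charge-2 sector: |20⟩, |11⟩, |02⟩. -/
def f2 (p : Fin 3 × Fin 3) : Fin 3 := if p = (2, 0) then 0 else if p = (1, 1) then 1 else 2

/-- position within the charge-3 sector: |21⟩, |12⟩. -/
def f3 (p : Fin 3 × Fin 3) : Fin 2 := if p = (2, 1) then 0 else 1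

/-- The 9×9 matrix with blocks of sizes 1,2,3,2,1 on the graded basis
|00⟩,|10⟩,|01⟩,|20⟩,|11⟩,|02⟩,|21⟩,|12⟩,|22⟩. -/
def blockR (b0 : ℂ) (B1 : Matrix (Fin 2) (Fin 2) ℂ) (B2 : Matrix (Fin 3) (Fin 3) ℂ)
    (B3 : Matrix (Fin 2) (Fin 2) ℂ) (b4 : ℂ) : Matrix (Fin 3 × Fin 3) (Fin 3 × Fin 3) ℂ :=
  fun p q =>
    if (p.1 : ℕ) + (p.2 : ℕ) ≠ (q.1 : ℕ) + (q.2 : ℕ) then 0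
    else if (p.1 : ℕ) + (p.2 : ℕ) = 0 then b0
    else if (p.1 : ℕ) + (p.2 : ℕ) = 1 then B1 (f1 p) (f1 q)
    else if (p.1 : ℕ) + (p.2 : ℕ) = 2 then B2 (f2 p) (f2 q)
    else if (p.1 : ℕ) + (p.2 : ℕ) = 3 then B3 (f3 p) (f3 q)
    else b4

/-!
`R̂₁ = R̂ ⊗ 1` and `R̂₂ = 1 ⊗ R̂` send a basis vector `|ijk⟩` of `V ⊗ V ⊗ V` to `(R̂|ij⟩) ⊗ |k⟩`
and `|i⟩ ⊗ R̂|jk⟩`, and every column of `R̂` has at most three nonzero entries. So both sides of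
the braid relation can be evaluated on each of the 27 basis vectors as short linear combinations
of basis vectors and compared coefficientwise. Writing `b = c d` removes the only division,
`b / c = d`, and each comparison becomes a polynomial identity in `c`, `d`, `x₃`.
-/

section Tensor

variable {R α β γ : Type*} [Semiring R]

def tensorRight [DecidableEq γ] (k : γ) : (α × β → R) →ₗ[R] (α × β × γ → R) where
  toFun v p := if p.2.2 = k then v (p.1, p.2.1) else 0
  map_add' v w := by ext; split_ifs <;> simp [*]
  map_smul' a v := by ext; split_ifs <;> simp [*]

def tensorLeft [DecidableEq α] (i : α) : (β × γ → R) →ₗ[R] (α × β × γ → R) where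
  toFun v p := if p.1 = i then v p.2 else 0
  map_add' v w := by ext; split_ifs <;> simp [*]
  map_smul' a v := by ext; split_ifs <;> simp [*]

variable [DecidableEq α] [DecidableEq β] [DecidableEq γ]

theorem tensorRight_single (a : α) (b : β) (k : γ) :
    tensorRight k (Pi.single (a, b) (1 : R)) = Pi.single (a, b, k) 1 := by
  ext ⟨p, q, r⟩
  by_cases r = k <;> simp [tensorRight, Pi.single_apply, *]

theorem tensorLeft_single (i : α) (a : β) (b : γ) :
    tensorLeft i (Pi.single (a, b) (1 : R)) = Pi.single (i, a, b) 1 := by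
  ext ⟨p, q, r⟩
  simp [tensorLeft, Pi.single_apply, ite_and]

end Tensor

theorem R1_mulVec_single (X : Matrix (Fin 3 × Fin 3) (Fin 3 × Fin 3) ℂ) (i j k : Fin 3) :
    R1 X *ᵥ Pi.single (i, j, k) 1 = tensorRight k (X *ᵥ Pi.single (i, j) 1) := by
  ext ⟨p, q, r⟩
  simp [R1, tensorRight, eq_comm]

theorem R2_mulVec_single (X : Matrix (Fin 3 × Fin 3) (Fin 3 × Fin 3) ℂ) (i j k : Fin 3) :
    R2 X *ᵥ Pi.single (i, j, k) 1 = tensorLeft i (X *ᵥ Pi.single (j, k) 1) := by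
  ext ⟨p, q, r⟩
  simp [R2, tensorLeft, eq_comm]

def sol54aR (b c d x3 : ℂ) : Matrix (Fin 3 × Fin 3) (Fin 3 × Fin 3) ℂ :=
  blockR 1 !![1 - b * c, b; c, 0] !![1 - b * c, 0, d; -x3 * c ^ 2, 1, x3; c ^ 2, 0, 0]
    !![1 - b * c, b; c, 0] 1

local notation "ket" a:max b:max => (Pi.single (a, b) 1 : Fin 3 × Fin 3 → ℂ)

theorem sol54aR_mulVec_single (b c d x3 : ℂ) (i j : Fin 3) :
    sol54aR b c d x3 *ᵥ ket i j =
    ![![ket 0 0, b • ket 1 0, d • ket 2 0 + x3 • ket 1 1],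
      ![(1 - b * c) • ket 1 0 + c • ket 0 1, ket 1 1, b • ket 2 1],
      ![(1 - b * c) • ket 2 0 + (-x3 * c ^ 2) • ket 1 1 + c ^ 2 • ket 0 2,
        (1 - b * c) • ket 2 1 + c • ket 1 2, ket 2 2]] i j := by
  ext ⟨p, q⟩
  rw [mulVec_single_one]
  fin_cases i <;> fin_cases j <;> fin_cases p <;> fin_cases q <;> simp [sol54aR, blockR, f1, f2, f3]

theorem braid_sol54aR_of_eq_mul (b c d x3 : ℂ) (h : b = c * d) :
    Braid (sol54aR b c d x3) := by
  subst h
  refine ext_of_mulVec_single fun ⟨i, j, k⟩ => ?_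
  simp only [← mulVec_mulVec]
  fin_cases i <;> fin_cases j <;> fin_cases k <;>
  · simp only [R1_mulVec_single, R2_mulVec_single, sol54aR_mulVec_single, mulVec_add, mulVec_smul,
      map_add, map_smul, tensorRight_single, tensorLeft_single, Matrix.cons_val,
      Fin.reduceFinMk] <;>
    module

/-- solution 5.4.a satisfies the braid relation. -/
theorem sol54a_braid (b c x3 : ℂ) (hbc : b * c ≠ 0) :
    Braid (blockR 1 !![1 - b * c, b; c, 0]
      !![1 - b * c, 0, b / c; -x3 * c ^ 2, 1, x3; c ^ 2, 0, 0]
      !![1 - b * c, b; c, 0] 1) :=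
  braid_sol54aR_of_eq_mul b c (b / c) x3 (mul_div_cancel₀ b (right_ne_zero_of_mul hbc)).symm
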